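/- One has 𝒢(2,2) = −(117√3)/(40π). -/

import Mathlib

open intervalIntegral Real Complex

/-- `u(t) = (−1 + i√(4t−1))/(2t)`. -/
noncomputable def uu (t : ℝ) : ℂ :=
  (-1 + Complex.I * (Real.sqrt (4 * t - 1) : ℝ)) / (2 * t)

/-- The renormalized Green's function of the triangular-lattice walk:
`𝒢(x,y) = (3/π) ∫_{1/4}^{1} (4t−1)^{−1/2} ( t^y Σ_{j=1}^{x} C(x,j)(1−t)^{j−1} Re(u(t)^j)
  − Σ_{ℓ=0}^{y−1} t^ℓ ) dt`. -/
noncomputable def calG (x y : ℕ) : ℝ :=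
  (3 / Real.pi) * ∫ t in (1/4 : ℝ)..1,
    (1 / Real.sqrt (4 * t - 1)) *
      (t ^ y * ∑ j ∈ Finset.Icc 1 x, (x.choose j : ℝ) * (1 - t) ^ (j - 1) * ((uu t) ^ j).re
        - ∑ l ∈ Finset.range y, t ^ l)
/-!
For `t ≥ 1/4` one has `Re u = -1/(2t)` and `Re u² = (1 - 2t)/(2t²)`, so for `x = y = 2` the
bracket in the integrand collapses to the polynomial `(2t² - 7t - 1)/2`. The substitution
`t = (1 + s²)/4` turns `√(4t - 1)` into `s` and `dt` into `(s/2) ds`, which cancels the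
singularity at `t = 1/4` and leaves a polynomial integral over `[0, √3]`, equal to `-39√3/40`.
-/

lemma uu_re (t : ℝ) : (uu t).re = -1 / (2 * t) := by
  rcases eq_or_ne t 0 with rfl | ht
  · simp [uu]
  simp [uu, Complex.div_re, Complex.normSq]
  field_simp

lemma uu_sq_re {t : ℝ} (ht : 1 / 4 ≤ t) : ((uu t) ^ 2).re = (1 - 2 * t) / (2 * t ^ 2) := by
  have hsq : √(4 * t - 1) ^ 2 = 4 * t - 1 := Real.sq_sqrt (by linarith)
  have ht0 : t ≠ 0 := by positivity
  simp only [uu, pow_two, div_mul_div_comm, Complex.div_re]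
  simp [Complex.normSq, Complex.mul_re, Complex.mul_im]
  field_simp
  linear_combination -hsq

lemma calG_integrand_two_two {t : ℝ} (ht : 1 / 4 ≤ t) :
    t ^ 2 * ∑ j ∈ Finset.Icc 1 2, (Nat.choose 2 j : ℝ) * (1 - t) ^ (j - 1) * ((uu t) ^ j).re
      - ∑ l ∈ Finset.range 2, t ^ l = (2 * t ^ 2 - 7 * t - 1) / 2 := by
  have ht0 : t ≠ 0 := by positivity
  rw [show Finset.Icc 1 2 = {1, 2} from rfl, Finset.sum_pair (by norm_num),
    Finset.sum_range_succ, Finset.sum_range_one, pow_one, uu_re, uu_sq_re ht]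
  field_simp
  norm_num
  ring

lemma integral_one_div_sqrt_four_mul_sub_one_mul (p : ℝ → ℝ) {b : ℝ} (hb : 1 / 4 ≤ b) :
    ∫ t in (1/4 : ℝ)..b, 1 / √(4 * t - 1) * p t
      = (1 / 2) * ∫ s in (0 : ℝ)..√(4 * b - 1), p ((1 + s ^ 2) / 4) := by
  have hsub := integral_comp_mul_deriv_of_deriv_nonneg (a := 0) (b := √(4 * b - 1))
    (f := fun s : ℝ => (1 + s ^ 2) / 4) (f' := fun s => s / 2)
    (g := fun t => 1 / √(4 * t - 1) * p t) (by fun_prop)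
    (fun s _ => by
      refine (((hasDerivAt_pow 2 s).const_add 1).div_const 4).congr_deriv ?_
      push_cast; ring)
    (fun s hs => by
      have : 0 < s := by simpa using hs.1
      positivity)
  rw [Real.sq_sqrt (by linarith), show (1 + (0 : ℝ) ^ 2) / 4 = 1 / 4 by norm_num,
    show (1 + (4 * b - 1)) / 4 = b by ring] at hsub
  rw [← hsub, ← intervalIntegral.integral_const_mul]
  refine intervalIntegral.integral_congr_uIoo fun s hs => ?_
  rw [Set.uIoo_of_le (Real.sqrt_nonneg _)] at hs
  have hs0 : s ≠ 0 := hs.1.ne'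
  simp only [Function.comp_apply]
  rw [show 4 * ((1 + s ^ 2) / 4) - 1 = s ^ 2 by ring, Real.sqrt_sq hs.1.le]
  field_simp

lemma integral_calG_two_two_substituted (b : ℝ) :
    ∫ s in (0 : ℝ)..b, (2 * ((1 + s ^ 2) / 4) ^ 2 - 7 * ((1 + s ^ 2) / 4) - 1) / 2
      = b ^ 5 / 80 - b ^ 3 / 4 - 21 * b / 16 := by
  have hpoly : (fun s : ℝ => (2 * ((1 + s ^ 2) / 4) ^ 2 - 7 * ((1 + s ^ 2) / 4) - 1) / 2)
      = fun s => s ^ 4 / 16 - 3 * s ^ 2 / 4 - 21 / 16 := by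
    funext s; ring
  have hint {f : ℝ → ℝ} (hf : Continuous f) : IntervalIntegrable f MeasureTheory.volume 0 b :=
    hf.intervalIntegrable _ _
  rw [hpoly, intervalIntegral.integral_sub (hint (by fun_prop)) (hint (by fun_prop)),
    intervalIntegral.integral_sub (hint (by fun_prop)) (hint (by fun_prop))]
  norm_num [integral_pow]
  ring

/-- `𝒢(2,2) = −(117√3)/(40π)`. -/
theorem calG_two_two : calG 2 2 = -(117 * Real.sqrt 3) / (40 * Real.pi) := by
  rw [calG, intervalIntegral.integral_congr
      (g := fun t => 1 / √(4 * t - 1) * ((2 * t ^ 2 - 7 * t - 1) / 2)) fun t ht => by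
        rw [Set.uIcc_of_le (by norm_num)] at ht
        dsimp only
        rw [calG_integrand_two_two ht.1],
    integral_one_div_sqrt_four_mul_sub_one_mul _ (by norm_num), integral_calG_two_two_substituted,
    show (4 * 1 - 1 : ℝ) = 3 by norm_num]
  have hsq : √3 ^ 2 = 3 := Real.sq_sqrt (by norm_num)
  have hpow5 : √3 ^ 5 = 9 * √3 := by rw [show √3 ^ 5 = (√3 ^ 2) ^ 2 * √3 by ring, hsq]; norm_num
  have hpow3 : √3 ^ 3 = 3 * √3 := by rw [pow_succ, hsq]
  rw [hpow5, hpow3]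
  field_simp
  ring
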